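/- arXiv:2001.03434 — 3 statements merged into one kernel-verified Lean document; each statement's English description precedes it below -/
import Mathlib

section
/- Let T be a linear isomorphism of ℝ². The following are equivalent: (1) T is angle-preserving, i.e. for all nonzero x, y in ℝ², ⟪T x, T y⟫ / (‖T x‖ · ‖T y‖) = ⟪x, y⟫ / (‖x‖ · ‖y‖); (2) T = c • O for some real c > 0 and some linear isometry O of ℝ²; (3) ‖T u‖ = ‖T v‖ for every orthonormal pair u, v with T u ⟂ T v. (Conformality is equivalent to the Tissot indicatrix being a circle, i.e. to the equality of the two semi-axes.) -/
/-!
If `T` preserves angles and `u, v` is orthonormal with `T u ⟂ T v`, the diagonal `u + v` makes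
equal angles with `u` and `v`, and so must `T u + T v` with `T u` and `T v`; hence
`‖T u‖ = ‖T v‖`. Conversely, an orthonormal eigenbasis of `T†T` is mapped to an orthogonal
family, so if all such pairs have images of equal length then `T†T` is a positive multiple of the
identity, i.e. `T` is a positive multiple of an isometry, and such maps preserve angles.
-/

open RealInnerProductSpace

variable {E F : Type*} [NormedAddCommGroup E] [InnerProductSpace ℝ E]
  [NormedAddCommGroup F] [InnerProductSpace ℝ F]

def PreservesAngles (f : E → F) : Prop :=
  ∀ x y : E, x ≠ 0 → y ≠ 0 → ⟪f x, f y⟫ / (‖f x‖ * ‖f y‖) = ⟪x, y⟫ / (‖x‖ * ‖y‖)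

/-- The semi-axes of the Tissot indicatrix `f '' sphere 0 1` are the images of an orthonormal
pair whose images are orthogonal; the indicatrix is a circle iff they have equal length. -/
def HasEqualSemiAxes (f : E → F) : Prop :=
  ∀ u v : E, ‖u‖ = 1 → ‖v‖ = 1 → ⟪u, v⟫ = 0 → ⟪f u, f v⟫ = 0 → ‖f u‖ = ‖f v‖

theorem inner_add_left_self_div_of_inner_eq_zero {x y : E} (h : ⟪x, y⟫ = 0) :
    ⟪x + y, x⟫ / (‖x + y‖ * ‖x‖) = ‖x‖ / ‖x + y‖ := by
  rw [inner_add_left, real_inner_self_eq_norm_sq, real_inner_comm, h, add_zero]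
  rcases eq_or_ne ‖x‖ 0 with hx | hx
  · simp [hx]
  · rw [mul_comm, pow_two, mul_div_mul_left _ _ hx]

theorem PreservesAngles.norm_map_eq_of_inner_eq_zero {f : E →ₗ[ℝ] F} (hf : PreservesAngles f)
    {u v : E} (hu : u ≠ 0) (huv_norm : ‖u‖ = ‖v‖) (huv : ⟪u, v⟫ = 0) (hfuv : ⟪f u, f v⟫ = 0) :
    ‖f u‖ = ‖f v‖ := by
  have hv : v ≠ 0 := norm_ne_zero_iff.mp (huv_norm ▸ norm_ne_zero_iff.mpr hu)
  have hfvu : ⟪f v, f u⟫ = 0 := by rwa [real_inner_comm]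
  have hvu : ⟪v, u⟫ = 0 := by rwa [real_inner_comm]
  have huv0 : u + v ≠ 0 := fun h => hu <| by
    have h' : ⟪u + v, u⟫ = 0 := by rw [h, inner_zero_left]
    rwa [inner_add_left, hvu, add_zero, inner_self_eq_zero] at h'
  have hu' := hf (u + v) u huv0 hu
  have hv' := hf (v + u) v (add_comm u v ▸ huv0) hv
  rw [map_add, inner_add_left_self_div_of_inner_eq_zero hfuv,
    inner_add_left_self_div_of_inner_eq_zero huv] at hu'
  rw [map_add, inner_add_left_self_div_of_inner_eq_zero hfvu,
    inner_add_left_self_div_of_inner_eq_zero hvu, add_comm (f v), add_comm v] at hv'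
  rcases eq_or_ne ‖f u + f v‖ 0 with h0 | h0
  · have hsq := norm_add_sq_real (f u) (f v)
    rw [h0, hfuv] at hsq
    nlinarith [norm_nonneg (f u), norm_nonneg (f v)]
  · exact (div_left_inj' h0).mp (by rw [hu', hv', huv_norm])

theorem PreservesAngles.hasEqualSemiAxes {f : E →ₗ[ℝ] F} (hf : PreservesAngles f) :
    HasEqualSemiAxes f := fun u v hu hv huv hfuv =>
  hf.norm_map_eq_of_inner_eq_zero (norm_ne_zero_iff.mp (by rw [hu]; exact one_ne_zero))
    (hu.trans hv.symm) huv hfuv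

theorem IsConformalMap.preservesAngles {f : E →L[ℝ] F} (hf : IsConformalMap f) :
    PreservesAngles f := by
  obtain ⟨c, hc, li, rfl⟩ := hf
  intro x y _ _
  have hc2 : |c| * |c| ≠ 0 := by positivity
  simp only [smul_apply, LinearIsometry.coe_toContinuousLinearMap,
    real_inner_smul_left, real_inner_smul_right, li.inner_map_map, norm_smul, li.norm_map,
    Real.norm_eq_abs]
  rw [← mul_assoc, ← abs_mul_abs_self c, mul_mul_mul_comm, mul_div_mul_left _ _ hc2]

-- `f` maps an orthonormal eigenbasis of `f†f` to an orthogonal family, so equal semi-axes force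
-- all eigenvalues of `f†f` to coincide.
theorem HasEqualSemiAxes.exists_inner_map_map_eq_mul [FiniteDimensional ℝ E]
    [FiniteDimensional ℝ F] {f : E →ₗ[ℝ] F} (hf : HasEqualSemiAxes f) :
    ∃ k : ℝ, ∀ x y : E, ⟪f x, f y⟫ = k * ⟪x, y⟫ := by
  have hS := LinearMap.isSymmetric_adjoint_comp_self f
  obtain ⟨b, μ, hb⟩ : ∃ (b : OrthonormalBasis (Fin (Module.finrank ℝ E)) ℝ E) (μ : _ → ℝ),
      ∀ i, (LinearMap.adjoint f ∘ₗ f) (b i) = μ i • b i :=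
    ⟨hS.eigenvectorBasis rfl, hS.eigenvalues rfl, hS.apply_eigenvectorBasis rfl⟩
  have hfb : ∀ i j, ⟪f (b i), f (b j)⟫ = μ i * ⟪b i, b j⟫ := fun i j => by
    rw [← LinearMap.adjoint_inner_left, ← LinearMap.comp_apply, hb, real_inner_smul_left]
  have hμ_eq_norm : ∀ i, μ i = ‖f (b i)‖ ^ 2 := fun i => by
    rw [← real_inner_self_eq_norm_sq, hfb, real_inner_self_eq_norm_sq, b.orthonormal.1 i,
      one_pow, mul_one]
  have hμ : ∀ i j, μ i = μ j := fun i j => by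
    rcases eq_or_ne i j with rfl | hij
    · rfl
    rw [hμ_eq_norm, hμ_eq_norm, hf (b i) (b j) (b.orthonormal.1 i) (b.orthonormal.1 j)
      (b.orthonormal.2 hij) (by rw [hfb, b.orthonormal.2 hij, mul_zero])]
  obtain ⟨k, hk⟩ : ∃ k, ∀ i, μ i = k := by
    rcases isEmpty_or_nonempty (Fin (Module.finrank ℝ E)) with hE | ⟨⟨i₀⟩⟩
    · exact ⟨0, hE.elim⟩
    · exact ⟨μ i₀, fun i => hμ i i₀⟩
  have hSk : LinearMap.adjoint f ∘ₗ f = k • LinearMap.id :=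
    b.toBasis.ext fun i => by
      rw [OrthonormalBasis.coe_toBasis, hb, hk]
      rfl
  refine ⟨k, fun x y => ?_⟩
  rw [← LinearMap.adjoint_inner_left, ← LinearMap.comp_apply, hSk, LinearMap.smul_apply,
    LinearMap.id_apply, real_inner_smul_left]

theorem HasEqualSemiAxes.isConformalMap [FiniteDimensional ℝ E] [FiniteDimensional ℝ F]
    {f : E →L[ℝ] F} (hinj : Function.Injective f) (hf : HasEqualSemiAxes f) :
    IsConformalMap f := by
  rcases subsingleton_or_nontrivial E with _ | _
  · exact isConformalMap_of_subsingleton f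
  obtain ⟨k, hk⟩ : ∃ k : ℝ, ∀ x y : E, ⟪f x, f y⟫ = k * ⟪x, y⟫ :=
    HasEqualSemiAxes.exists_inner_map_map_eq_mul (f := (f : E →ₗ[ℝ] F)) hf
  obtain ⟨x, hx⟩ := exists_ne (0 : E)
  have hfx : f x ≠ 0 := fun h => hx (hinj (h.trans (map_zero f).symm))
  have hk_pos : 0 < k := by
    have h := hk x x
    rw [real_inner_self_eq_norm_sq, real_inner_self_eq_norm_sq] at h
    have hkx : 0 < k * ‖x‖ ^ 2 := by rw [← h]; positivity
    exact pos_of_mul_pos_left hkx (by positivity)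
  exact (isConformalMap_iff f).mpr ⟨k, hk_pos, hk⟩

theorem isConformalMap_of_eq_smul_linearIsometry {f : E →L[ℝ] F} {c : ℝ} (hc : c ≠ 0)
    {O : E →ₗᵢ[ℝ] F} (hO : ∀ x, f x = c • O x) : IsConformalMap f :=
  ⟨c, hc, O, ContinuousLinearMap.ext hO⟩

theorem IsConformalMap.exists_pos_smul_linearIsometry {f : E →L[ℝ] F} (hf : IsConformalMap f) :
    ∃ c : ℝ, 0 < c ∧ ∃ O : E →ₗᵢ[ℝ] F, ∀ x, f x = c • O x := by
  obtain ⟨c, hc, li, rfl⟩ := hf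
  rcases hc.lt_or_gt with hneg | hpos
  · refine ⟨-c, neg_pos.mpr hneg, (LinearIsometryEquiv.neg ℝ).toLinearIsometry.comp li, ?_⟩
    intro x
    simp
  · exact ⟨c, hpos, li, fun x => rfl⟩

/-- Characterizations of conformality for a linear isomorphism `T` of the
Euclidean plane: (1) `T` preserves angles; (2) `T = c • O` with `c > 0` and `O`
a linear isometry; (3) the two semi-axes of the Tissot indicatrix are equal,
i.e. `‖T u‖ = ‖T v‖` for every orthonormal pair `u, v` with `T u ⟂ T v`. -/
theorem tissot_conformal_characterization
    (T : EuclideanSpace ℝ (Fin 2) ≃L[ℝ] EuclideanSpace ℝ (Fin 2)) :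
    ((∀ x y : EuclideanSpace ℝ (Fin 2), x ≠ 0 → y ≠ 0 →
        ⟪T x, T y⟫ / (‖T x‖ * ‖T y‖) = ⟪x, y⟫ / (‖x‖ * ‖y‖)) ↔
      (∃ c : ℝ, 0 < c ∧
        ∃ O : EuclideanSpace ℝ (Fin 2) →ₗᵢ[ℝ] EuclideanSpace ℝ (Fin 2),
          ∀ x, T x = c • O x)) ∧
    ((∀ x y : EuclideanSpace ℝ (Fin 2), x ≠ 0 → y ≠ 0 →
        ⟪T x, T y⟫ / (‖T x‖ * ‖T y‖) = ⟪x, y⟫ / (‖x‖ * ‖y‖)) ↔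
      (∀ u v : EuclideanSpace ℝ (Fin 2),
        ‖u‖ = 1 → ‖v‖ = 1 → ⟪u, v⟫ = 0 → ⟪T u, T v⟫ = 0 →
          ‖T u‖ = ‖T v‖)) := by
  set f : EuclideanSpace ℝ (Fin 2) →L[ℝ] EuclideanSpace ℝ (Fin 2) := ↑T
  have hsemiaxes : HasEqualSemiAxes f ↔ IsConformalMap f :=
    ⟨HasEqualSemiAxes.isConformalMap T.injective, fun h =>
      PreservesAngles.hasEqualSemiAxes (f := f.toLinearMap) h.preservesAngles⟩
  have hangles : PreservesAngles f ↔ IsConformalMap f :=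
    ⟨fun h => hsemiaxes.mp (PreservesAngles.hasEqualSemiAxes (f := f.toLinearMap) h),
      IsConformalMap.preservesAngles⟩
  have hscaled : (∃ c : ℝ, 0 < c ∧ ∃ O : _ →ₗᵢ[ℝ] _, ∀ x, f x = c • O x) ↔ IsConformalMap f :=
    ⟨fun ⟨_, hc, _, hO⟩ => isConformalMap_of_eq_smul_linearIsometry hc.ne' hO,
      IsConformalMap.exists_pos_smul_linearIsometry⟩
  exact ⟨hangles.trans hscaled.symm, hangles.trans hsemiaxes.symm⟩
end

section
/- Let f : ℝ² → ℝ² be a map differentiable at a point p whose derivative (fderiv ℝ f p) is a linear isomorphism. Then there exists an orthonormal pair u, v in ℝ² such that ⟪(fderiv ℝ f p) u, (fderiv ℝ f p) v⟫ = 0. (Tissot's theorem at the level of differentiable mappings: at each point where the map is differentiable and nondegenerate, there is a pair of orthogonal directions sent to orthogonal directions.) -/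
open RealInnerProductSpace

/- Tissot's theorem is a statement about the linear map `T = fderiv ℝ f p` alone: an orthonormal
eigenbasis of the symmetric operator `T† T` is sent by `T` to an orthogonal family, since
`⟪T bᵢ, T bⱼ⟫ = ⟪T† T bᵢ, bⱼ⟫ = λᵢ ⟪bᵢ, bⱼ⟫`. -/

theorem LinearMap.exists_orthonormalBasis_pairwise_inner_apply_eq_zero
    {𝕜 E F : Type*} [RCLike 𝕜] [NormedAddCommGroup E] [InnerProductSpace 𝕜 E]
    [FiniteDimensional 𝕜 E] [NormedAddCommGroup F] [InnerProductSpace 𝕜 F]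
    [FiniteDimensional 𝕜 F] (T : E →ₗ[𝕜] F) {n : ℕ} (hn : Module.finrank 𝕜 E = n) :
    ∃ b : OrthonormalBasis (Fin n) 𝕜 E, Pairwise fun i j ↦ inner 𝕜 (T (b i)) (T (b j)) = 0 := by
  have hS := T.isSymmetric_adjoint_comp_self
  refine ⟨hS.eigenvectorBasis hn, fun i j hij ↦ ?_⟩
  change inner 𝕜 _ _ = 0
  rw [← LinearMap.adjoint_inner_right, ← LinearMap.comp_apply, hS.apply_eigenvectorBasis,
    inner_smul_right, (hS.eigenvectorBasis hn).orthonormal.2 hij, mul_zero]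

theorem tissot_principal_tangents_of_differentiable_general
    (f : EuclideanSpace ℝ (Fin 2) → EuclideanSpace ℝ (Fin 2))
    (p : EuclideanSpace ℝ (Fin 2)) :
    ∃ u v : EuclideanSpace ℝ (Fin 2), ‖u‖ = 1 ∧ ‖v‖ = 1 ∧ ⟪u, v⟫ = 0 ∧
      ⟪fderiv ℝ f p u, fderiv ℝ f p v⟫ = 0 := by
  obtain ⟨b, hb⟩ := (fderiv ℝ f p : EuclideanSpace ℝ (Fin 2) →ₗ[ℝ] EuclideanSpace ℝ (Fin 2))
    |>.exists_orthonormalBasis_pairwise_inner_apply_eq_zero finrank_euclideanSpace_fin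
  exact ⟨b 0, b 1, b.orthonormal.1 0, b.orthonormal.1 1, b.orthonormal.2 (by decide),
    hb (by decide)⟩

/-- Tissot's theorem at the level of differentiable mappings: if `f` is
differentiable at `p` with bijective derivative, then there is an orthonormal
pair of directions sent by the derivative to orthogonal directions. -/
theorem tissot_principal_tangents_of_differentiable
    (f : EuclideanSpace ℝ (Fin 2) → EuclideanSpace ℝ (Fin 2))
    (p : EuclideanSpace ℝ (Fin 2))
    (hf : DifferentiableAt ℝ f p)
    (hbij : Function.Bijective (fderiv ℝ f p)) :
    ∃ u v : EuclideanSpace ℝ (Fin 2), ‖u‖ = 1 ∧ ‖v‖ = 1 ∧ ⟪u, v⟫ = 0 ∧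
      ⟪fderiv ℝ f p u, fderiv ℝ f p v⟫ = 0 :=
  tissot_principal_tangents_of_differentiable_general f p
end

section
/- Let T be a linear isomorphism of ℝ², let u, v be an orthonormal pair with T u ⟂ T v, and set a = max(‖T u‖, ‖T v‖), b = min(‖T u‖, ‖T v‖). Then for all unit vectors x, y in ℝ² with ⟪x, y⟫ = 0, one has a · b ≤ ‖T x‖ · ‖T y‖, and ‖T x‖ · ‖T y‖ ≤ (a² + b²)/2; i.e. among all pairs of orthogonal unit directions, the product of the length distortions is minimized at the principal tangents. -/
/-!
Write `x = c • u + s • v` in the principal basis. Since `T u ⟂ T v`, Pythagoras gives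
`‖T x‖² = c² ‖T u‖² + s² ‖T v‖²`, and for the orthogonal unit vector `y` the weights are swapped,
`‖T y‖² = s² ‖T u‖² + c² ‖T v‖²`, because Parseval for `u` in the basis `x, y` gives
`⟪u, y⟫² = 1 - c² = s²`. Hence `‖T x‖² + ‖T y‖² = ‖T u‖² + ‖T v‖²`, which with AM-GM gives
the upper bound, and `‖T x‖² ‖T y‖² = ‖T u‖² ‖T v‖² + (c s (‖T u‖² - ‖T v‖²))²`, the lower bound.
-/

open RealInnerProductSpace Module

section TwoDimensional

variable {E F 𝓕 : Type*} [NormedAddCommGroup E] [InnerProductSpace ℝ E]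
  [NormedAddCommGroup F] [InnerProductSpace ℝ F] [FunLike 𝓕 E F] [LinearMapClass 𝓕 ℝ E F]
  {u v x y : E}

theorem orthonormal_pair (hu : ‖u‖ = 1) (hv : ‖v‖ = 1) (huv : ⟪u, v⟫ = 0) :
    Orthonormal ℝ ![u, v] := by
  refine ⟨Fin.forall_fin_two.2 ⟨hu, hv⟩, fun {i j} hij => ?_⟩
  fin_cases i <;> fin_cases j <;> simp_all [real_inner_comm u v]

theorem exists_orthonormalBasis_coe_eq_pair (hE : finrank ℝ E = 2)
    (hu : ‖u‖ = 1) (hv : ‖v‖ = 1) (huv : ⟪u, v⟫ = 0) :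
    ∃ b : OrthonormalBasis (Fin 2) ℝ E, ⇑b = ![u, v] := by
  have hon := orthonormal_pair hu hv huv
  have hspan := hon.linearIndependent.span_eq_top_of_card_eq_finrank (by simp [hE])
  exact ⟨.mk hon hspan.ge, OrthonormalBasis.coe_mk _ _⟩

theorem inner_smul_add_inner_smul_eq (hE : finrank ℝ E = 2)
    (hu : ‖u‖ = 1) (hv : ‖v‖ = 1) (huv : ⟪u, v⟫ = 0) (z : E) :
    ⟪u, z⟫ • u + ⟪v, z⟫ • v = z := by
  obtain ⟨b, hb⟩ := exists_orthonormalBasis_coe_eq_pair hE hu hv huv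
  simpa [Fin.sum_univ_two, hb] using b.sum_repr' z

theorem inner_sq_add_inner_sq_eq_norm_sq (hE : finrank ℝ E = 2)
    (hu : ‖u‖ = 1) (hv : ‖v‖ = 1) (huv : ⟪u, v⟫ = 0) (z : E) :
    ⟪u, z⟫ ^ 2 + ⟪v, z⟫ ^ 2 = ‖z‖ ^ 2 := by
  obtain ⟨b, hb⟩ := exists_orthonormalBasis_coe_eq_pair hE hu hv huv
  simpa [Fin.sum_univ_two, hb] using b.sum_sq_inner_right z

theorem inner_sq_eq_inner_sq_of_orthonormal (hE : finrank ℝ E = 2)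
    (hu : ‖u‖ = 1) (hv : ‖v‖ = 1) (huv : ⟪u, v⟫ = 0)
    (hx : ‖x‖ = 1) (hy : ‖y‖ = 1) (hxy : ⟪x, y⟫ = 0) :
    ⟪u, y⟫ ^ 2 = ⟪v, x⟫ ^ 2 := by
  have hx' := inner_sq_add_inner_sq_eq_norm_sq hE hu hv huv x
  have hu' := inner_sq_add_inner_sq_eq_norm_sq hE hx hy hxy u
  rw [real_inner_comm u x, real_inner_comm u y, hu] at hu'
  rw [hx] at hx'
  linarith

theorem norm_map_sq_eq_of_inner_map_eq_zero (hE : finrank ℝ E = 2)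
    (hu : ‖u‖ = 1) (hv : ‖v‖ = 1) (huv : ⟪u, v⟫ = 0) {T : 𝓕} (hT : ⟪T u, T v⟫ = 0) (z : E) :
    ‖T z‖ ^ 2 = ⟪u, z⟫ ^ 2 * ‖T u‖ ^ 2 + ⟪v, z⟫ ^ 2 * ‖T v‖ ^ 2 := by
  have hTz : T z = ⟪u, z⟫ • T u + ⟪v, z⟫ • T v := by
    rw [← map_smul, ← map_smul, ← map_add, inner_smul_add_inner_smul_eq hE hu hv huv z]
  rw [hTz, norm_add_sq_real, real_inner_smul_left, real_inner_smul_right, hT, norm_smul,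
    norm_smul, mul_pow, mul_pow, Real.norm_eq_abs, Real.norm_eq_abs, sq_abs, sq_abs]
  ring

variable (hE : finrank ℝ E = 2) (hu : ‖u‖ = 1) (hv : ‖v‖ = 1) (huv : ⟪u, v⟫ = 0)
  {T : 𝓕} (hT : ⟪T u, T v⟫ = 0) (hx : ‖x‖ = 1) (hy : ‖y‖ = 1) (hxy : ⟪x, y⟫ = 0)
include hE hu hv huv hT hx hy hxy

theorem norm_map_orthogonal_sq_eq :
    ‖T y‖ ^ 2 = ⟪v, x⟫ ^ 2 * ‖T u‖ ^ 2 + ⟪u, x⟫ ^ 2 * ‖T v‖ ^ 2 := by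
  have hvu : ⟪v, u⟫ = 0 := by rwa [real_inner_comm]
  rw [norm_map_sq_eq_of_inner_map_eq_zero hE hu hv huv hT y,
    inner_sq_eq_inner_sq_of_orthonormal hE hu hv huv hx hy hxy,
    inner_sq_eq_inner_sq_of_orthonormal hE hv hu hvu hx hy hxy]

theorem norm_map_sq_add_norm_map_sq_eq :
    ‖T x‖ ^ 2 + ‖T y‖ ^ 2 = ‖T u‖ ^ 2 + ‖T v‖ ^ 2 := by
  have hx' := inner_sq_add_inner_sq_eq_norm_sq hE hu hv huv x
  rw [hx] at hx'
  rw [norm_map_sq_eq_of_inner_map_eq_zero hE hu hv huv hT x,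
    norm_map_orthogonal_sq_eq hE hu hv huv hT hx hy hxy]
  linear_combination (‖T u‖ ^ 2 + ‖T v‖ ^ 2) * hx'

theorem norm_map_mul_norm_map_le :
    ‖T u‖ * ‖T v‖ ≤ ‖T x‖ * ‖T y‖ := by
  set c := ⟪u, x⟫
  set s := ⟪v, x⟫
  have hx' : c ^ 2 + s ^ 2 = 1 := by
    rw [inner_sq_add_inner_sq_eq_norm_sq hE hu hv huv x, hx, one_pow]
  have key : (‖T x‖ * ‖T y‖) ^ 2 =
      (‖T u‖ * ‖T v‖) ^ 2 + (c * s * (‖T u‖ ^ 2 - ‖T v‖ ^ 2)) ^ 2 := by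
    rw [mul_pow, mul_pow, norm_map_sq_eq_of_inner_map_eq_zero hE hu hv huv hT x,
      norm_map_orthogonal_sq_eq hE hu hv huv hT hx hy hxy]
    linear_combination ‖T u‖ ^ 2 * ‖T v‖ ^ 2 * (c ^ 2 + s ^ 2 + 1) * hx'
  refine le_of_pow_le_pow_left₀ two_ne_zero (by positivity) ?_
  rw [key]
  exact le_add_of_nonneg_right (sq_nonneg _)

end TwoDimensional

/-- Among all pairs of orthogonal unit directions, the product of the length
distortions under `T` is at least the product `a · b` of the semi-axes of the
Tissot indicatrix (attained at the principal tangents) and at most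
`(a² + b²)/2`. -/
theorem tissot_product_distortion_bounds
    (T : EuclideanSpace ℝ (Fin 2) ≃L[ℝ] EuclideanSpace ℝ (Fin 2))
    (u v : EuclideanSpace ℝ (Fin 2))
    (hu : ‖u‖ = 1) (hv : ‖v‖ = 1) (huv : ⟪u, v⟫ = 0) (hT : ⟪T u, T v⟫ = 0)
    (a b : ℝ) (ha : a = max ‖T u‖ ‖T v‖) (hb : b = min ‖T u‖ ‖T v‖) :
    ∀ x y : EuclideanSpace ℝ (Fin 2), ‖x‖ = 1 → ‖y‖ = 1 → ⟪x, y⟫ = 0 →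
      a * b ≤ ‖T x‖ * ‖T y‖ ∧ ‖T x‖ * ‖T y‖ ≤ (a ^ 2 + b ^ 2) / 2 := by
  intro x y hx hy hxy
  have hE : finrank ℝ (EuclideanSpace ℝ (Fin 2)) = 2 := finrank_euclideanSpace_fin
  have hab : a * b = ‖T u‖ * ‖T v‖ := by rw [ha, hb, max_mul_min]
  have hab2 : a ^ 2 + b ^ 2 = ‖T u‖ ^ 2 + ‖T v‖ ^ 2 := by
    rw [ha, hb]
    exact fn_max_add_fn_min (· ^ 2) _ _
  constructor
  · rw [hab]
    exact norm_map_mul_norm_map_le hE hu hv huv hT hx hy hxy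
  · rw [hab2, ← norm_map_sq_add_norm_map_sq_eq hE hu hv huv hT hx hy hxy]
    linarith [two_mul_le_add_sq ‖T x‖ ‖T y‖]
end
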